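/- Let d ≥ 1 and let P₀ be a real polynomial of degree ≤ d in the two variables (x₂,y₂), regarded also as a polynomial in four variables (x₁,y₁,x₂,y₂). Then the minimum over two-variable polynomials p₁, p₂, p₃ of degree ≤ d of the coefficient norm ‖P₀(x₂,y₂) + p₁(x₁,x₂) + p₂(y₁,y₂) + p₃(x₁+y₁,x₂+y₂)‖ equals the minimum over one-variable polynomials q₁, q₂, q₃ of degree ≤ d of the coefficient norm ‖P₀(x₂,y₂) + q₁(x₂) + q₂(y₂) + q₃(x₂+y₂)‖. -/

import Mathlib

/-!
A triple `q₁, q₂, q₃` of one-variable polynomials is also admissible on the four-variable side,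
as `pᵢ(s, t) = qᵢ(t)`; the resulting four-variable polynomial is the two-variable one with
`(x, y)` renamed to `(x₂, y₂)`, which has the same coefficients. Conversely, setting
`x₁ = y₁ = 0` turns `P₀ + p₁(x₁,x₂) + p₂(y₁,y₂) + p₃(x₁+y₁,x₂+y₂)` into
`P₀ + q₁(x₂) + q₂(y₂) + q₃(x₂+y₂)` with `qᵢ(t) = pᵢ(0, t)`, and this substitution only discards
coefficients, so it does not increase the coefficient norm.
-/

open MvPolynomial

/-- The ℓ² norm of the vector of coefficients of a polynomial. -/
noncomputable def coeffNorm {σ : Type*} (p : MvPolynomial σ ℝ) : ℝ :=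
  Real.sqrt (∑ α ∈ p.support, (p.coeff α) ^ 2)

lemma csInf_eq_csInf_of_subset_of_forall_exists_le {α : Type*} [ConditionallyCompleteLattice α]
    {s t : Set α} (hs : s.Nonempty) (ht : BddBelow t) (hst : s ⊆ t)
    (h : ∀ b ∈ t, ∃ a ∈ s, a ≤ b) : sInf t = sInf s :=
  le_antisymm (csInf_le_csInf ht hs hst) <| le_csInf (hs.mono hst) fun b hb =>
    let ⟨_, ha, hab⟩ := h b hb
    (csInf_le (ht.mono hst) ha).trans hab

section CoeffNorm

variable {σ τ : Type*}

lemma coeffNorm_nonneg (p : MvPolynomial σ ℝ) : 0 ≤ coeffNorm p :=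
  Real.sqrt_nonneg _

lemma coeffNorm_rename {f : σ → τ} (hf : Function.Injective f) (p : MvPolynomial σ ℝ) :
    coeffNorm (rename f p) = coeffNorm p := by
  classical
  rw [coeffNorm, coeffNorm, support_rename_of_injective hf,
    Finset.sum_image fun _ _ _ _ h => Finsupp.mapDomain_injective hf h]
  simp_rw [coeff_rename_mapDomain f hf]

lemma coeffNorm_killCompl_le {f : σ → τ} (hf : Function.Injective f) (p : MvPolynomial τ ℝ) :
    coeffNorm (killCompl hf p) ≤ coeffNorm p := by
  classical
  refine Real.sqrt_le_sqrt ?_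
  simp_rw [support_killCompl, coeff_killCompl]
  rw [Finset.sum_preimage' (Finsupp.mapDomain f) _ _ fun t => p.coeff t ^ 2]
  exact Finset.sum_le_sum_of_subset_of_nonneg (Finset.filter_subset _ _)
    fun _ _ _ => sq_nonneg _

end CoeffNorm

section Substitutions

variable {R σ τ : Type*} [CommSemiring R]

lemma killCompl_X_apply {f : σ → τ} (hf : Function.Injective f) (i : σ) :
    killCompl hf (X (f i) : MvPolynomial τ R) = X i := by
  rw [← rename_X, killCompl_rename_app]

lemma killCompl_X_of_notMem_range {f : σ → τ} (hf : Function.Injective f) {j : τ}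
    (hj : j ∉ Set.range f) : killCompl hf (X j : MvPolynomial τ R) = 0 := by
  classical
  rw [killCompl, aeval_X, dif_neg hj]

lemma totalDegree_toMvPolynomial_le (q : Polynomial R) (i : σ) :
    (q.toMvPolynomial i).totalDegree ≤ q.natDegree := by
  rw [Polynomial.toMvPolynomial, Polynomial.aeval_eq_sum_range]
  refine (totalDegree_finsetSum _ _).trans (Finset.sup_le fun k hk => ?_)
  rw [X_pow_eq_monomial]
  refine (totalDegree_smul_le _ _).trans ((totalDegree_monomial_le _ _).trans ?_)
  simpa [Nat.lt_succ_iff] using hk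

lemma map_aeval_vecCons_two {A B : Type*} [CommSemiring A] [Algebra R A] [CommSemiring B]
    [Algebra R B] (φ : A →ₐ[R] B) (a b : A) (p : MvPolynomial (Fin 2) R) :
    φ (aeval ![a, b] p) = aeval ![φ a, φ b] p := by
  rw [comp_aeval_apply]
  congr 2
  funext i
  fin_cases i <;> rfl

noncomputable def restrictFstZero (p : MvPolynomial (Fin 2) R) : Polynomial R :=
  aeval ![0, Polynomial.X] p

lemma natDegree_restrictFstZero_le (p : MvPolynomial (Fin 2) R) :
    (restrictFstZero p).natDegree ≤ p.totalDegree := by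
  simpa [restrictFstZero] using aeval_natDegree_le (n := 1) p le_rfl ![0, Polynomial.X]
    fun i => by fin_cases i <;> simp [Polynomial.natDegree_X_le]

lemma aeval_zero_vecCons {A : Type*} [CommSemiring A] [Algebra R A] (w : A)
    (p : MvPolynomial (Fin 2) R) :
    aeval ![0, w] p = Polynomial.aeval w (restrictFstZero p) := by
  rw [restrictFstZero, map_aeval_vecCons_two, map_zero, Polynomial.aeval_X]

end Substitutions

section Objectives

/-- The variables `0, 1, 2, 3` are `x₁, y₁, x₂, y₂`. -/
noncomputable def fourVarObjective (P₀ p₁ p₂ p₃ : MvPolynomial (Fin 2) ℝ) :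
    MvPolynomial (Fin 4) ℝ :=
  aeval ![X 2, X 3] P₀ + aeval ![X 0, X 2] p₁ + aeval ![X 1, X 3] p₂
    + aeval ![X 0 + X 1, X 2 + X 3] p₃

noncomputable def twoVarObjective (P₀ : MvPolynomial (Fin 2) ℝ) (q₁ q₂ q₃ : Polynomial ℝ) :
    MvPolynomial (Fin 2) ℝ :=
  P₀ + Polynomial.aeval (X 0) q₁ + Polynomial.aeval (X 1) q₂ + Polynomial.aeval (X 0 + X 1) q₃

lemma injective_vecCons_two_three : Function.Injective ![(2 : Fin 4), 3] := by decide

lemma aeval_X_two_three_eq_rename (P₀ : MvPolynomial (Fin 2) ℝ) :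
    aeval ![(X 2 : MvPolynomial (Fin 4) ℝ), X 3] P₀ = rename ![2, 3] P₀ := by
  rw [rename_eq_aeval]
  congr 2
  funext i
  fin_cases i <;> rfl

lemma fourVarObjective_toMvPolynomial_one (P₀ : MvPolynomial (Fin 2) ℝ)
    (q₁ q₂ q₃ : Polynomial ℝ) :
    fourVarObjective P₀ (q₁.toMvPolynomial 1) (q₂.toMvPolynomial 1) (q₃.toMvPolynomial 1)
      = rename ![2, 3] (twoVarObjective P₀ q₁ q₂ q₃) := by
  simp only [fourVarObjective, twoVarObjective, map_add, aeval_toMvPolynomial,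
    ← Polynomial.aeval_algHom_apply, rename_X, aeval_X_two_three_eq_rename,
    Matrix.cons_val_zero, Matrix.cons_val_one, Matrix.cons_val_fin_one]

lemma killCompl_fourVarObjective (P₀ p₁ p₂ p₃ : MvPolynomial (Fin 2) ℝ) :
    killCompl injective_vecCons_two_three (fourVarObjective P₀ p₁ p₂ p₃)
      = twoVarObjective P₀ (restrictFstZero p₁) (restrictFstZero p₂) (restrictFstZero p₃) := by
  have h₀ : killCompl injective_vecCons_two_three (X 0 : MvPolynomial (Fin 4) ℝ) = 0 :=
    killCompl_X_of_notMem_range _ (by simp)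
  have h₁ : killCompl injective_vecCons_two_three (X 1 : MvPolynomial (Fin 4) ℝ) = 0 :=
    killCompl_X_of_notMem_range _ (by simp)
  have h₂ : killCompl injective_vecCons_two_three (X 2 : MvPolynomial (Fin 4) ℝ) = X 0 :=
    killCompl_X_apply injective_vecCons_two_three 0
  have h₃ : killCompl injective_vecCons_two_three (X 3 : MvPolynomial (Fin 4) ℝ) = X 1 :=
    killCompl_X_apply injective_vecCons_two_three 1
  simp only [fourVarObjective, twoVarObjective, map_add, aeval_X_two_three_eq_rename,
    killCompl_rename_app, map_aeval_vecCons_two, h₀, h₁, h₂, h₃, zero_add, aeval_zero_vecCons]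

end Objectives

theorem stmt_10_general (d : ℕ)
    (P₀ : MvPolynomial (Fin 2) ℝ) :
    sInf { r : ℝ | ∃ p₁ p₂ p₃ : MvPolynomial (Fin 2) ℝ,
        p₁.totalDegree ≤ d ∧ p₂.totalDegree ≤ d ∧ p₃.totalDegree ≤ d ∧
        r = coeffNorm ((MvPolynomial.aeval
              ![(MvPolynomial.X 2 : MvPolynomial (Fin 4) ℝ), MvPolynomial.X 3] P₀)
          + MvPolynomial.aeval ![MvPolynomial.X 0, MvPolynomial.X 2] p₁
          + MvPolynomial.aeval ![MvPolynomial.X 1, MvPolynomial.X 3] p₂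
          + MvPolynomial.aeval ![MvPolynomial.X 0 + MvPolynomial.X 1,
              MvPolynomial.X 2 + MvPolynomial.X 3] p₃) }
    = sInf { r : ℝ | ∃ q₁ q₂ q₃ : Polynomial ℝ,
        q₁.natDegree ≤ d ∧ q₂.natDegree ≤ d ∧ q₃.natDegree ≤ d ∧
        r = coeffNorm (P₀ + Polynomial.aeval (MvPolynomial.X 0) q₁
          + Polynomial.aeval (MvPolynomial.X 1) q₂
          + Polynomial.aeval (MvPolynomial.X 0 + MvPolynomial.X 1) q₃) } := by
  refine csInf_eq_csInf_of_subset_of_forall_exists_le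
    ⟨_, 0, 0, 0, by simp, by simp, by simp, rfl⟩ ⟨0, ?_⟩ ?_ ?_
  · rintro _ ⟨p₁, p₂, p₃, -, -, -, rfl⟩
    exact coeffNorm_nonneg _
  · rintro _ ⟨q₁, q₂, q₃, h₁, h₂, h₃, rfl⟩
    refine ⟨q₁.toMvPolynomial 1, q₂.toMvPolynomial 1, q₃.toMvPolynomial 1,
      (totalDegree_toMvPolynomial_le q₁ 1).trans h₁, (totalDegree_toMvPolynomial_le q₂ 1).trans h₂,
      (totalDegree_toMvPolynomial_le q₃ 1).trans h₃, ?_⟩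
    exact ((congrArg coeffNorm (fourVarObjective_toMvPolynomial_one P₀ q₁ q₂ q₃)).trans
      (coeffNorm_rename injective_vecCons_two_three _)).symm
  · rintro _ ⟨p₁, p₂, p₃, h₁, h₂, h₃, rfl⟩
    refine ⟨_, ⟨restrictFstZero p₁, restrictFstZero p₂, restrictFstZero p₃,
      (natDegree_restrictFstZero_le p₁).trans h₁, (natDegree_restrictFstZero_le p₂).trans h₂,
      (natDegree_restrictFstZero_le p₃).trans h₃, rfl⟩, ?_⟩
    exact (congrArg coeffNorm (killCompl_fourVarObjective P₀ p₁ p₂ p₃)).symm.trans_le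
      (coeffNorm_killCompl_le injective_vecCons_two_three _)

/-- the two interpretations of `‖P₀‖_nd` coincide: for a polynomial `P₀`
in the variables `(x₂,y₂)` (regarded in four variables `(x₁,y₁,x₂,y₂)`, indexed
`0 ↦ x₁`, `1 ↦ y₁`, `2 ↦ x₂`, `3 ↦ y₂`, via the embedding `x₂ ↦ X 2`, `y₂ ↦ X 3`),
the minimum of `‖P₀(x₂,y₂) + p₁(x₁,x₂) + p₂(y₁,y₂) + p₃(x₁+y₁,x₂+y₂)‖` over two-variable
polynomials `p₁,p₂,p₃` of degree `≤ d` equals the minimum of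
`‖P₀(x₂,y₂) + q₁(x₂) + q₂(y₂) + q₃(x₂+y₂)‖` over one-variable polynomials `q₁,q₂,q₃` of
degree `≤ d`. -/
theorem stmt_10 (d : ℕ) (hd : 1 ≤ d)
    (P₀ : MvPolynomial (Fin 2) ℝ) (hP₀ : P₀.totalDegree ≤ d) :
    sInf { r : ℝ | ∃ p₁ p₂ p₃ : MvPolynomial (Fin 2) ℝ,
        p₁.totalDegree ≤ d ∧ p₂.totalDegree ≤ d ∧ p₃.totalDegree ≤ d ∧
        r = coeffNorm ((MvPolynomial.aeval
              ![(MvPolynomial.X 2 : MvPolynomial (Fin 4) ℝ), MvPolynomial.X 3] P₀)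
          + MvPolynomial.aeval ![MvPolynomial.X 0, MvPolynomial.X 2] p₁
          + MvPolynomial.aeval ![MvPolynomial.X 1, MvPolynomial.X 3] p₂
          + MvPolynomial.aeval ![MvPolynomial.X 0 + MvPolynomial.X 1,
              MvPolynomial.X 2 + MvPolynomial.X 3] p₃) }
    = sInf { r : ℝ | ∃ q₁ q₂ q₃ : Polynomial ℝ,
        q₁.natDegree ≤ d ∧ q₂.natDegree ≤ d ∧ q₃.natDegree ≤ d ∧
        r = coeffNorm (P₀ + Polynomial.aeval (MvPolynomial.X 0) q₁
          + Polynomial.aeval (MvPolynomial.X 1) q₂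
          + Polynomial.aeval (MvPolynomial.X 0 + MvPolynomial.X 1) q₃) } :=
  stmt_10_general d P₀
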